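/- arXiv:1709.05812 — 2 statements merged into one kernel-verified Lean document; each statement's English description precedes it below -/
import Mathlib

section
/- Let k ≥ 3 be odd and let A be a cyclically k-diagonal partially filled n × n array (n ≥ k) whose nonempty entries are pairwise distinct, with gcd(n, k−1) = 1. Then there exist an ordering ω_r of the filled cells which is a product of n disjoint k-cycles (one per row, the natural left-to-right cyclic order) and an ordering ω_c which is a product of n disjoint k-cycles (one per column) such that the composition ω_r ∘ ω_c is a single cycle of length nk on the set of filled cells. -/
set_option linter.unusedSectionVars false
set_option maxHeartbeats 1000000


/-- The filled cells of a cyclically `k`-diagonal `n × n` array whose nonempty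
diagonals start at diagonal offset `r`: cell `(i,j)` is filled iff
`j - i ≡ r + t (mod n)` for some `0 ≤ t < k`. -/
def FilledCell (n k : ℕ) (r : ZMod n) (p : Fin n × Fin n) : Prop :=
  ∃ t : ℕ, t < k ∧ ((p.2.val : ZMod n) - (p.1.val : ZMod n) = r + (t : ZMod n))

namespace CompatAux

open Equiv Equiv.Perm

variable (n k : ℕ) [NeZero n] [NeZero k] (r : ZMod n)

/-- cast the canonical representative of `ZMod k` into `ZMod n` -/
def tv (t : ZMod k) : ZMod n := (t.val : ZMod n)

/-- the rotation `t ↦ t+1` in the second coordinate -/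
def rho : Equiv.Perm (ZMod n × ZMod k) :=
  Equiv.prodCongr (Equiv.refl _) (Equiv.addRight 1)

lemma rho_apply (x : ZMod n × ZMod k) : rho n k x = (x.1, x.2 + 1) := rfl

lemma rho_pow (m : ℕ) : ∀ x : ZMod n × ZMod k,
    ((rho n k) ^ m) x = (x.1, x.2 + (m : ZMod k)) := by
  induction m with
  | zero => intro x; simp
  | succ m ih =>
      intro x
      rw [pow_succ, Equiv.Perm.mul_apply, rho_apply, ih]
      simp only [Prod.mk.injEq, true_and]
      push_cast
      ring

/-- column of a coordinate pair -/
def colOf (x : ZMod n × ZMod k) : ZMod n := x.1 + r + tv n k x.2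

/-- change of coordinates: cell coords `(i,t)` to column coords `(c,s)`;
the special column `c = r` is traversed in the reverse order. -/
def psiC : Equiv.Perm (ZMod n × ZMod k) where
  toFun x := (x.1 + r + tv n k x.2, if x.1 + r + tv n k x.2 = r then x.2 else -1 - x.2)
  invFun y :=
    (y.1 - r - tv n k (if y.1 = r then y.2 else -1 - y.2),
      if y.1 = r then y.2 else -1 - y.2)
  left_inv := by
    rintro ⟨i, t⟩
    by_cases h : i + r + tv n k t = r
    · simp [h]; linear_combination -h
    · simp [h]; ring
  right_inv := by
    rintro ⟨c, s⟩
    by_cases h : c = r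
    · have h2 : c - r - tv n k s + r + tv n k s = c := by ring
      simp [h, h2]
    · have h2 : c - r - tv n k (-1 - s) + r + tv n k (-1 - s) = c := by ring
      simp [h, h2]

def sigmaC : Equiv.Perm (ZMod n × ZMod k) := (psiC n k r)⁻¹ * rho n k * psiC n k r

def phi : Equiv.Perm (ZMod n × ZMod k) := rho n k * sigmaC n k r

lemma psiC_fst (x : ZMod n × ZMod k) : (psiC n k r x).1 = colOf n k r x := rfl

lemma colOf_psiC_symm (y : ZMod n × ZMod k) :
    colOf n k r ((psiC n k r).symm y) = y.1 := by
  rcases y with ⟨c, s⟩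
  by_cases h : c = r <;> simp [psiC, colOf, h] <;> ring

lemma sigmaC_apply (x : ZMod n × ZMod k) :
    sigmaC n k r x = (psiC n k r).symm (rho n k (psiC n k r x)) := rfl

lemma colOf_sigmaC (x : ZMod n × ZMod k) :
    colOf n k r (sigmaC n k r x) = colOf n k r x := by
  rw [sigmaC_apply, colOf_psiC_symm, rho_apply]
  exact psiC_fst n k r x

lemma sigmaC_pow (m : ℕ) :
    (sigmaC n k r) ^ m = (psiC n k r)⁻¹ * (rho n k) ^ m * psiC n k r := by
  have : sigmaC n k r = (psiC n k r)⁻¹ * rho n k * ((psiC n k r)⁻¹)⁻¹ := by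
    rw [inv_inv]; rfl
  rw [this, conj_pow, inv_inv]

lemma sigmaC_sameCycle (x y : ZMod n × ZMod k) (h : colOf n k r x = colOf n k r y) :
    (sigmaC n k r).SameCycle x y := by
  refine ⟨(((psiC n k r y).2 - (psiC n k r x).2).val : ℕ), ?_⟩
  rw [zpow_natCast, sigmaC_pow, Equiv.Perm.mul_apply, Equiv.Perm.mul_apply, rho_pow,
    ZMod.natCast_zmod_val]
  have h1 : (psiC n k r x).1 = (psiC n k r y).1 := by
    rw [psiC_fst, psiC_fst, h]
  have : ((psiC n k r x).1, (psiC n k r x).2 + ((psiC n k r y).2 - (psiC n k r x).2))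
      = psiC n k r y := by
    rw [h1]; simp
  rw [this]
  simp [Equiv.Perm.inv_def]

lemma phi_apply (i : ZMod n) (t : ZMod k) :
    phi n k r (i, t) = if i + r + tv n k t = r then (i + tv n k t - tv n k (t + 1), t + 2)
      else (i + tv n k t - tv n k (t - 1), t) := by
  have e1 : (-1 : ZMod k) - (-1 - t + 1) = t - 1 := by ring
  by_cases h : i + r + tv n k t = r
  · rw [if_pos h]
    simp only [phi, sigmaC, Equiv.Perm.mul_apply, Equiv.Perm.inv_def]
    simp [psiC, rho, h]
    exact ⟨by linear_combination -h, by ring⟩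
  · rw [if_neg h]
    simp only [phi, sigmaC, Equiv.Perm.mul_apply, Equiv.Perm.inv_def]
    simp [psiC, rho, h, e1]
    ring

lemma tv_natCast (m : ℕ) (hm : m < k) : tv n k ((m : ℕ) : ZMod k) = (m : ZMod n) := by
  unfold tv; rw [ZMod.val_cast_of_lt hm]

lemma tv_zero : tv n k (0 : ZMod k) = 0 := by
  simp [tv]

lemma tv_def (t : ZMod k) : tv n k t = ((t.val : ℕ) : ZMod n) := rfl

lemma tv_sub_one {t : ZMod k} (ht : t ≠ 0) : tv n k (t - 1) = tv n k t - 1 := by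
  have hv := ZMod.val_lt t
  have h1 : 1 ≤ t.val := Nat.pos_of_ne_zero (fun hh => ht ((ZMod.val_eq_zero t).mp hh))
  have h2 : t - 1 = ((t.val - 1 : ℕ) : ZMod k) := by
    rw [Nat.cast_sub h1, ZMod.natCast_zmod_val, Nat.cast_one]
  rw [h2, tv_natCast n k _ (by omega), Nat.cast_sub h1, Nat.cast_one, tv_def]

lemma tv_neg_one : tv n k (-1 : ZMod k) = (k : ZMod n) - 1 := by
  have hk : 1 ≤ k := Nat.one_le_iff_ne_zero.mpr (NeZero.ne k)
  have h2 : (-1 : ZMod k) = ((k - 1 : ℕ) : ZMod k) := by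
    rw [Nat.cast_sub hk, ZMod.natCast_self, Nat.cast_one, zero_sub]
  rw [h2, tv_natCast n k _ (by omega), Nat.cast_sub hk, Nat.cast_one]

/-- base point of diagonal `t` -/
def Ept (t : ZMod k) : ZMod n × ZMod k := (-tv n k (t - 1), t)

lemma phi_pow_diag {t : ZMod k} (ht : t ≠ 0) :
    ∀ m : ℕ, m < n →
      ((phi n k r) ^ m) (Ept n k t) = (-tv n k (t - 1) + (m : ZMod n), t) := by
  have s1 : tv n k (t - 1) = tv n k t - 1 := tv_sub_one n k ht
  intro m
  induction m with
  | zero => intro _; simp [Ept]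
  | succ m ih =>
      intro hm
      have hm' : m < n := by omega
      have key : ((m + 1 : ℕ) : ZMod n) ≠ 0 := by
        rw [Ne, ZMod.natCast_eq_zero_iff]
        intro hdvd
        have := Nat.le_of_dvd (by omega) hdvd
        omega
      rw [pow_succ', Equiv.Perm.mul_apply, ih hm', phi_apply]
      rw [if_neg (fun hcon => key (by push_cast; linear_combination hcon + s1))]
      simp only [Prod.mk.injEq]
      refine ⟨?_, by first | rfl | trivial⟩
      push_cast
      linear_combination -s1

lemma phi_pow_diag0 (hgcd : Nat.gcd n (k - 1) = 1) :
    ∀ m : ℕ, m < n →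
      ((phi n k r) ^ m) (Ept n k 0)
        = (-((m + 1 : ℕ) : ZMod n) * ((k : ZMod n) - 1), 0) := by
  have hk1 : 1 ≤ k := Nat.one_le_iff_ne_zero.mpr (NeZero.ne k)
  have hz : (0 : ZMod k) - 1 = -1 := by ring
  have hcast : ((k : ZMod n) - 1) = ((k - 1 : ℕ) : ZMod n) := by
    rw [Nat.cast_sub hk1]; push_cast; ring
  intro m
  induction m with
  | zero =>
      intro _
      simp only [pow_zero, Equiv.Perm.one_apply, Ept, hz, tv_neg_one, Prod.mk.injEq]
      refine ⟨?_, by first | rfl | trivial⟩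
      push_cast
      ring
  | succ m ih =>
      intro hm
      have hm' : m < n := by omega
      have key : ((m + 1 : ℕ) : ZMod n) * ((k : ZMod n) - 1) ≠ 0 := by
        intro hcon
        have h0 : (((m + 1) * (k - 1) : ℕ) : ZMod n) = 0 := by
          push_cast [Nat.cast_sub hk1]
          push_cast at hcon
          linear_combination hcon
        rw [ZMod.natCast_eq_zero_iff] at h0
        have hco : Nat.Coprime n (k - 1) := hgcd
        have := hco.dvd_of_dvd_mul_right h0
        have := Nat.le_of_dvd (by omega) this
        omega
      rw [pow_succ', Equiv.Perm.mul_apply, ih hm', phi_apply]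
      rw [if_neg (fun hcon => key (by rw [tv_zero] at hcon; linear_combination -hcon))]
      rw [tv_zero, hz, tv_neg_one]
      simp only [Prod.mk.injEq]
      refine ⟨?_, by first | rfl | trivial⟩
      push_cast
      ring

lemma phi_sameCycle_all (hkodd : Odd k) (hgcd : Nat.gcd n (k - 1) = 1) :
    ∀ a b : ZMod n × ZMod k, (phi n k r).SameCycle a b := by
  have hk1 : 1 ≤ k := Nat.one_le_iff_ne_zero.mpr (NeZero.ne k)
  have covE : ∀ (t : ZMod k) (i : ZMod n),
      (phi n k r).SameCycle (Ept n k t) (i, t) := by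
    intro t i
    by_cases ht : t = 0
    · subst ht
      have hco : Nat.Coprime (k - 1) n := Nat.coprime_comm.mp hgcd
      have hu : IsUnit ((k - 1 : ℕ) : ZMod n) := (ZMod.isUnit_iff_coprime (k - 1) n).mpr hco
      obtain ⟨v, hv⟩ := hu.exists_right_inv
      set m := (-i * v - 1).val with hmdef
      refine ⟨(m : ℤ), ?_⟩
      rw [zpow_natCast, phi_pow_diag0 n k r hgcd m (ZMod.val_lt _)]
      simp only [Prod.mk.injEq]
      refine ⟨?_, by first | rfl | trivial⟩
      have h1 : ((m : ℕ) : ZMod n) = -i * v - 1 := ZMod.natCast_zmod_val _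
      have hcast : ((k : ZMod n) - 1) = ((k - 1 : ℕ) : ZMod n) := by
        rw [Nat.cast_sub hk1]; push_cast; ring
      rw [hcast]
      push_cast
      rw [h1]
      linear_combination i * hv
    · set m := (i + tv n k (t - 1)).val with hmdef
      refine ⟨(m : ℤ), ?_⟩
      rw [zpow_natCast, phi_pow_diag n k r ht m (ZMod.val_lt _)]
      simp only [Prod.mk.injEq]
      refine ⟨?_, by first | rfl | trivial⟩
      rw [hmdef, ZMod.natCast_zmod_val]
      ring
  have hstep : ∀ t : ZMod k, (phi n k r).SameCycle (Ept n k t) (Ept n k (t + 2)) := by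
    intro t
    have h1 := covE t (-tv n k t)
    have h2 : phi n k r (-tv n k t, t) = Ept n k (t + 2) := by
      rw [phi_apply, if_pos (by ring)]
      unfold Ept
      have harg : t + 2 - 1 = t + 1 := by ring
      rw [harg]
      simp only [Prod.mk.injEq]
      exact ⟨by ring, by first | rfl | trivial⟩
    exact h1.trans ⟨1, by rw [zpow_one, h2]⟩
  have e0 : ∀ m : ℕ, (phi n k r).SameCycle (Ept n k 0) (Ept n k ((2 * m : ℕ) : ZMod k)) := by
    intro m
    induction m with
    | zero => simpa using Equiv.Perm.SameCycle.refl _ _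
    | succ m ih =>
        have hs := hstep ((2 * m : ℕ) : ZMod k)
        have harg : ((2 * m : ℕ) : ZMod k) + 2 = ((2 * (m + 1) : ℕ) : ZMod k) := by
          push_cast; ring
        rw [harg] at hs
        exact ih.trans hs
  have eall : ∀ t : ZMod k, (phi n k r).SameCycle (Ept n k 0) (Ept n k t) := by
    intro t
    have hco : Nat.Coprime 2 k := Nat.coprime_two_left.mpr hkodd
    have hu : IsUnit ((2 : ℕ) : ZMod k) := (ZMod.isUnit_iff_coprime 2 k).mpr hco
    obtain ⟨v, hv⟩ := hu.exists_right_inv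
    have hv' : (2 : ZMod k) * v = 1 := by push_cast at hv; exact hv
    have h := e0 ((v * t).val)
    have harg : ((2 * (v * t).val : ℕ) : ZMod k) = t := by
      push_cast [ZMod.natCast_zmod_val]
      linear_combination t * hv'
    rwa [harg] at h
  intro a b
  obtain ⟨a1, a2⟩ := a
  obtain ⟨b1, b2⟩ := b
  exact (((covE a2 a1).symm.trans (eall a2).symm).trans (eall b2)).trans (covE b2 b1)

lemma rho_sameCycle (x y : ZMod n × ZMod k) (h : x.1 = y.1) : (rho n k).SameCycle x y := by
  refine ⟨(((y.2 - x.2).val : ℕ) : ℤ), ?_⟩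
  rw [zpow_natCast, rho_pow, ZMod.natCast_zmod_val, h]
  simp


def zf (a : ZMod n) : Fin n := ⟨a.val, ZMod.val_lt a⟩

/-- the coordinates equivalence with the set of filled cells -/
def EC (hkn : k ≤ n) : (ZMod n × ZMod k) ≃ {p : Fin n × Fin n // FilledCell n k r p} where
  toFun x := ⟨(zf n x.1, zf n (colOf n k r x)),
    ⟨x.2.val, ZMod.val_lt _, by
      show (((zf n (colOf n k r x)).val : ℕ) : ZMod n)
          - (((zf n x.1).val : ℕ) : ZMod n) = r + ((x.2.val : ℕ) : ZMod n)
      simp only [zf, ZMod.natCast_zmod_val]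
      rw [← tv_def]
      unfold colOf
      ring⟩⟩
  invFun p := ((p.val.1.val : ZMod n),
    ((((p.val.2.val : ZMod n) - (p.val.1.val : ZMod n) - r).val : ℕ) : ZMod k))
  left_inv := by
    rintro ⟨i, t⟩
    simp only [zf, ZMod.natCast_zmod_val]
    have h1 : colOf n k r (i, t) - i - r = ((t.val : ℕ) : ZMod n) := by
      rw [show colOf n k r (i, t) = i + r + tv n k t from rfl, tv_def]
      ring
    rw [h1, ZMod.val_cast_of_lt (lt_of_lt_of_le (ZMod.val_lt t) hkn), ZMod.natCast_zmod_val]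
  right_inv := by
    rintro ⟨⟨p1, p2⟩, hp⟩
    obtain ⟨t0, ht0k, ht0⟩ := hp
    have h2 : ((p2.val : ZMod n) - (p1.val : ZMod n) - r) = ((t0 : ℕ) : ZMod n) := by
      linear_combination ht0
    apply Subtype.ext
    have ht0n : t0 < n := lt_of_lt_of_le ht0k hkn
    have hcol : colOf n k r ((p1.val : ZMod n), ((((p2.val : ZMod n) - (p1.val : ZMod n)
        - r).val : ℕ) : ZMod k)) = ((p2.val : ℕ) : ZMod n) := by
      unfold colOf
      rw [h2, ZMod.val_cast_of_lt ht0n, tv_def, ZMod.val_cast_of_lt ht0k]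
      linear_combination -ht0
    show ((zf n ((p1.val : ℕ) : ZMod n), zf n (colOf n k r _)) : Fin n × Fin n) = (p1, p2)
    rw [hcol]
    have e1 : zf n ((p1.val : ℕ) : ZMod n) = p1 :=
      Fin.ext (ZMod.val_cast_of_lt p1.isLt)
    have e2 : zf n ((p2.val : ℕ) : ZMod n) = p2 :=
      Fin.ext (ZMod.val_cast_of_lt p2.isLt)
    rw [e1, e2]

lemma colOf_EC_symm (hkn : k ≤ n) (x : {p : Fin n × Fin n // FilledCell n k r p}) :
    colOf n k r ((EC n k r hkn).symm x) = ((x.val.2.val : ℕ) : ZMod n) := by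
  obtain ⟨⟨p1, p2⟩, hp⟩ := x
  obtain ⟨t0, ht0k, ht0⟩ := hp
  have h2 : ((p2.val : ZMod n) - (p1.val : ZMod n) - r) = ((t0 : ℕ) : ZMod n) := by
    linear_combination ht0
  show colOf n k r ((p1.val : ZMod n), ((((p2.val : ZMod n) - (p1.val : ZMod n)
      - r).val : ℕ) : ZMod k)) = _
  unfold colOf
  rw [h2, ZMod.val_cast_of_lt (lt_of_lt_of_le ht0k hkn), tv_def, ZMod.val_cast_of_lt ht0k]
  linear_combination -ht0

lemma EC_symm_fst (hkn : k ≤ n) (x : {p : Fin n × Fin n // FilledCell n k r p}) :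
    ((EC n k r hkn).symm x).1 = ((x.val.1.val : ℕ) : ZMod n) := rfl

lemma EC_fst (hkn : k ≤ n) (y : ZMod n × ZMod k) :
    ((EC n k r hkn) y).val.1 = zf n y.1 := rfl

lemma EC_snd (hkn : k ≤ n) (y : ZMod n × ZMod k) :
    ((EC n k r hkn) y).val.2 = zf n (colOf n k r y) := rfl

lemma permCongr_pow {α β : Type*} (e : α ≃ β) (σ : Equiv.Perm α) (m : ℕ) :
    (e.permCongr σ) ^ m = e.permCongr (σ ^ m) := by
  induction m with
  | zero => ext x; simp
  | succ m ih => ext x; simp [pow_succ, ih, Equiv.Perm.mul_apply]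

lemma permCongr_inv {α β : Type*} (e : α ≃ β) (σ : Equiv.Perm α) :
    (e.permCongr σ)⁻¹ = e.permCongr σ⁻¹ := by
  apply inv_eq_of_mul_eq_one_right
  ext x
  simp [Equiv.Perm.mul_apply]

lemma permCongr_zpow {α β : Type*} (e : α ≃ β) (σ : Equiv.Perm α) (m : ℤ) :
    (e.permCongr σ) ^ m = e.permCongr (σ ^ m) := by
  cases m with
  | ofNat m =>
      rw [Int.ofNat_eq_coe, zpow_natCast, zpow_natCast]
      exact permCongr_pow e σ m
  | negSucc m => rw [zpow_negSucc, zpow_negSucc, permCongr_pow, permCongr_inv]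

lemma sameCycle_permCongr {α β : Type*} (e : α ≃ β) (σ : Equiv.Perm α) {x y : α}
    (h : σ.SameCycle x y) : (e.permCongr σ).SameCycle (e x) (e y) := by
  obtain ⟨m, hm⟩ := h
  exact ⟨m, by rw [permCongr_zpow]; simp [hm]⟩

end CompatAux

/-- For an odd `k ≥ 3` and a cyclically `k`-diagonal `n × n` array with `n ≥ k` and
`gcd(n, k-1) = 1`, there exist orderings `ωr` of the rows and `ωc` of the columns
(permutations of the filled cells whose orbits are exactly the rows, resp. the
columns) which are compatible: `ωr ∘ ωc` is a single cycle on all `nk` filled cells. -/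
theorem compatible_orderings_of_k_diagonal (n k : ℕ) [NeZero n]
    (hk3 : 3 ≤ k) (hkodd : Odd k) (hkn : k ≤ n) (hgcd : Nat.gcd n (k - 1) = 1)
    (r : ZMod n) :
    ∃ ωr ωc : Equiv.Perm {p : Fin n × Fin n // FilledCell n k r p},
      (∀ x, (ωr x).val.1 = x.val.1) ∧
      (∀ x y, x.val.1 = y.val.1 → ωr.SameCycle x y) ∧
      (∀ x, (ωc x).val.2 = x.val.2) ∧
      (∀ x y, x.val.2 = y.val.2 → ωc.SameCycle x y) ∧
      (∀ x y, (ωr * ωc).SameCycle x y) := by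
  haveI : NeZero k := ⟨by omega⟩
  set E := CompatAux.EC n k r hkn with hE
  refine ⟨E.permCongr (CompatAux.rho n k), E.permCongr (CompatAux.sigmaC n k r),
    ?_, ?_, ?_, ?_, ?_⟩
  · intro x
    rw [Equiv.permCongr_apply, CompatAux.EC_fst]
    have h1 : (CompatAux.rho n k (E.symm x)).1 = (E.symm x).1 := rfl
    rw [h1, CompatAux.EC_symm_fst]
    exact Fin.ext (ZMod.val_cast_of_lt x.val.1.isLt)
  · intro x y h
    have h1 : (E.symm x).1 = (E.symm y).1 := by
      rw [CompatAux.EC_symm_fst, CompatAux.EC_symm_fst, h]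
    have := CompatAux.sameCycle_permCongr E _
      (CompatAux.rho_sameCycle n k (E.symm x) (E.symm y) h1)
    simpa using this
  · intro x
    rw [Equiv.permCongr_apply, CompatAux.EC_snd, CompatAux.colOf_sigmaC,
      CompatAux.colOf_EC_symm]
    exact Fin.ext (ZMod.val_cast_of_lt x.val.2.isLt)
  · intro x y h
    have h1 : CompatAux.colOf n k r (E.symm x) = CompatAux.colOf n k r (E.symm y) := by
      rw [CompatAux.colOf_EC_symm, CompatAux.colOf_EC_symm, h]
    have := CompatAux.sameCycle_permCongr E _
      (CompatAux.sigmaC_sameCycle n k r (E.symm x) (E.symm y) h1)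
    simpa using this
  · have hmul : E.permCongr (CompatAux.rho n k) * E.permCongr (CompatAux.sigmaC n k r)
        = E.permCongr (CompatAux.phi n k r) := by
      apply Equiv.ext
      intro z
      rw [Equiv.Perm.mul_apply, Equiv.permCongr_apply, Equiv.permCongr_apply,
        Equiv.permCongr_apply, Equiv.symm_apply_apply, CompatAux.phi,
        Equiv.Perm.mul_apply]
    rw [hmul]
    intro x y
    have := CompatAux.sameCycle_permCongr E _
      (CompatAux.phi_sameCycle_all n k r hkodd hgcd (E.symm x) (E.symm y))
    simpa using this
end

section
/- Let A be a cyclically 7-diagonal partially filled n × n array of odd size n ≥ 7 whose nonempty entries are pairwise distinct. Then there exist compatible orderings ω_r of the rows and ω_c of the columns of A, i.e., permutations of the 7n filled cells whose orbits are the rows (resp. columns), such that ω_r ∘ ω_c is a single cycle of length 7n. -/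
namespace SevenDiagAux

open Equiv Equiv.Perm

set_option linter.unusedSectionVars false
set_option linter.unusedVariables false

lemma sameCycle_of_pow {α : Type*} (f : Perm α) {x y : α} (k : ℕ) (h : (f ^ k) x = y) :
    f.SameCycle x y := ⟨(k : ℤ), by rwa [zpow_natCast]⟩

lemma sameCycle_apply {α : Type*} (f : Perm α) (x : α) : f.SameCycle x (f x) :=
  ⟨1, by simp⟩

variable {n : ℕ} [NeZero n]

def z (n : ℕ) [NeZero n] (t : ZMod 7) : ZMod n := (t.val : ZMod n)

lemma z_succ {t : ZMod 7} (ht : t ≠ 0) : z n t = z n (t - 1) + 1 := by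
  have h : ∀ t : ZMod 7, t ≠ 0 → t.val = (t - 1).val + 1 := by decide
  unfold z; rw [h t ht]; push_cast; ring

lemma natCast_val' (a : ZMod n) : ((a.val : ℕ) : ZMod n) = a := by
  simp [ZMod.natCast_val, ZMod.cast_id]

def wr (c : ZMod n → ZMod 7) : Perm (ZMod n × ZMod 7) where
  toFun x := (x.1, x.2 + c x.1)
  invFun x := (x.1, x.2 - c x.1)
  left_inv x := by simp
  right_inv x := by simp

variable (n) in
def wc : Perm (ZMod n × ZMod 7) where
  toFun x := (x.1 + z n x.2 - z n (x.2 - 1), x.2 - 1)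
  invFun x := (x.1 + z n x.2 - z n (x.2 + 1), x.2 + 1)
  left_inv x := by
    obtain ⟨i, t⟩ := x
    simp only [sub_add_cancel]
    exact Prod.ext (by ring) rfl
  right_inv x := by
    obtain ⟨i, t⟩ := x
    simp only [add_sub_cancel_right]
    exact Prod.ext (by ring) rfl

lemma pi_step1 (c : ZMod n → ZMod 7) {t : ZMod 7} (ht : t ≠ 0) (i : ZMod n) :
    (wr c * wc n) (i, t) = (i + 1, (t - 1) + c (i + 1)) := by
  have harg : i + z n t - z n (t - 1) = i + 1 := by rw [z_succ ht]; ring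
  show (i + z n t - z n (t - 1), (t - 1) + c (i + z n t - z n (t - 1))) = _
  rw [harg]

lemma pi_step0 (c : ZMod n → ZMod 7) (i : ZMod n) :
    (wr c * wc n) (i, (0 : ZMod 7)) = (i - 6, 6 + c (i - 6)) := by
  have h0 : z n (0 : ZMod 7) = 0 := by unfold z; simp
  have h6v : ((0 : ZMod 7) - 1).val = 6 := by decide
  have h6 : z n ((0 : ZMod 7) - 1) = 6 := by unfold z; rw [h6v]; norm_num
  have harg : i + z n (0 : ZMod 7) - z n ((0 : ZMod 7) - 1) = i - 6 := by
    rw [h0, h6]; ring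
  have h61 : (0 : ZMod 7) - 1 = 6 := by decide
  show (i + z n (0:ZMod 7) - z n ((0:ZMod 7) - 1),
      ((0:ZMod 7) - 1) + c (i + z n (0:ZMod 7) - z n ((0:ZMod 7) - 1))) = _
  rw [harg, h61]

lemma cast_ne_zero' {m : ℕ} (h0 : 0 < m) (h : m < n) : ((m : ℕ) : ZMod n) ≠ 0 := by
  intro hh
  rw [ZMod.natCast_eq_zero_iff] at hh
  have := Nat.le_of_dvd h0 hh
  omega

lemma cast_neg_one : ((n - 1 : ℕ) : ZMod n) = -1 := by
  have hn1 : 1 ≤ n := Nat.one_le_iff_ne_zero.mpr (NeZero.ne n)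
  rw [Nat.cast_sub hn1]
  simp

lemma val_cast_small {m : ℕ} (h : m < n) : (((m : ℕ) : ZMod n)).val = m :=
  ZMod.val_cast_of_lt h



def permCongrMul {α β : Type*} (e : α ≃ β) : Equiv.Perm α ≃* Equiv.Perm β :=
  { e.permCongr with
    map_mul' := fun p q => by
      ext x
      simp [Equiv.permCongr_apply, Equiv.Perm.mul_apply] }

lemma permCongr_sameCycle {α β : Type*} (e : α ≃ β) (f : Equiv.Perm α) {a b : α}
    (h : f.SameCycle a b) : (e.permCongr f).SameCycle (e a) (e b) := by
  obtain ⟨k, hk⟩ := h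
  refine ⟨k, ?_⟩
  have h2 : (e.permCongr f) ^ k = e.permCongr (f ^ k) := by
    have := map_zpow (permCongrMul e) f k
    exact this.symm
  rw [h2]
  simp [Equiv.permCongr_apply, hk]

def toFin (a : ZMod n) : Fin n := ⟨a.val, a.val_lt⟩

lemma toFin_inj : Function.Injective (toFin (n := n)) := by
  intro a b h
  exact ZMod.val_injective n (congrArg Fin.val h)

def cellFun (r : ZMod n) (x : ZMod n × ZMod 7) : {p : Fin n × Fin n // FilledCell n 7 r p} :=
  ⟨(toFin x.1, toFin (x.1 + r + z n x.2)), by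
    refine ⟨x.2.val, x.2.val_lt, ?_⟩
    show (((x.1 + r + z n x.2).val : ℕ) : ZMod n) - ((x.1.val : ℕ) : ZMod n) = _
    rw [natCast_val', natCast_val']
    show x.1 + r + z n x.2 - x.1 = r + z n x.2
    ring⟩

lemma z_inj {t u : ZMod 7} (hn : 7 ≤ n) (h : z n t = z n u) : t = u := by
  have ht : (z n t).val = t.val := ZMod.val_cast_of_lt (lt_of_lt_of_le t.val_lt hn)
  have hu : (z n u).val = u.val := ZMod.val_cast_of_lt (lt_of_lt_of_le u.val_lt hn)
  have : t.val = u.val := by rw [← ht, ← hu, h]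
  exact ZMod.val_injective 7 this

lemma cellFun_inj (r : ZMod n) (hn : 7 ≤ n) : Function.Injective (cellFun (n := n) r) := by
  intro x y h
  have h1 : toFin x.1 = toFin y.1 := congrArg (fun p => p.val.1) h
  have h2 : toFin (x.1 + r + z n x.2) = toFin (y.1 + r + z n y.2) :=
    congrArg (fun p => p.val.2) h
  have e1 : x.1 = y.1 := toFin_inj h1
  have e2 : x.1 + r + z n x.2 = y.1 + r + z n y.2 := toFin_inj h2
  have e3 : z n x.2 = z n y.2 := by
    rw [e1] at e2
    exact add_left_cancel e2
  exact Prod.ext e1 (z_inj hn e3)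

lemma cellFun_surj (r : ZMod n) (hn : 7 ≤ n) : Function.Surjective (cellFun (n := n) r) := by
  rintro ⟨⟨a, b⟩, t, ht7, ht⟩
  refine ⟨(((a.val : ℕ) : ZMod n), ((t : ℕ) : ZMod 7)), ?_⟩
  have hzt : z n ((t : ℕ) : ZMod 7) = ((t : ℕ) : ZMod n) := by
    unfold z
    rw [ZMod.val_cast_of_lt ht7]
  apply Subtype.ext
  refine Prod.ext ?_ ?_
  · show toFin ((a.val : ℕ) : ZMod n) = a
    apply Fin.ext
    show (((a.val : ℕ) : ZMod n)).val = a.val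
    exact ZMod.val_cast_of_lt a.isLt
  · show toFin (((a.val : ℕ) : ZMod n) + r + z n ((t : ℕ) : ZMod 7)) = b
    have hb : ((a.val : ℕ) : ZMod n) + r + z n ((t : ℕ) : ZMod 7) = ((b.val : ℕ) : ZMod n) := by
      rw [hzt]
      have := ht
      linear_combination -this
    rw [hb]
    apply Fin.ext
    exact ZMod.val_cast_of_lt b.isLt

noncomputable def cellEquiv (r : ZMod n) (hn : 7 ≤ n) :
    (ZMod n × ZMod 7) ≃ {p : Fin n × Fin n // FilledCell n 7 r p} :=
  Equiv.ofBijective _ ⟨cellFun_inj r hn, cellFun_surj r hn⟩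

lemma wc_snd (x : ZMod n × ZMod 7) :
    ((wc n x).1 : ZMod n) + z n (wc n x).2 = x.1 + z n x.2 := by
  obtain ⟨i, t⟩ := x
  show i + z n t - z n (t - 1) + z n (t - 1) = i + z n t
  ring

lemma wr_pow (c : ZMod n → ZMod 7) (k : ℕ) (i : ZMod n) (t : ZMod 7) :
    ((wr c) ^ k) (i, t) = (i, t + (k : ZMod 7) * c i) := by
  induction k with
  | zero => simp
  | succ k ih =>
      rw [pow_succ', Equiv.Perm.mul_apply, ih]
      show (i, t + (k : ZMod 7) * c i + c i) = _
      push_cast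
      exact Prod.ext rfl (by ring)

lemma wr_row_sameCycle (c : ZMod n → ZMod 7) (hc : ∀ i, c i ≠ 0)
    (x y : ZMod n × ZMod 7) (h : x.1 = y.1) : (wr c).SameCycle x y := by
  obtain ⟨i, t⟩ := x
  obtain ⟨j, u⟩ := y
  simp only at h
  subst h
  refine sameCycle_of_pow _ (((u - t) * (c i)⁻¹).val) ?_
  rw [wr_pow]
  have h1 : ((((u - t) * (c i)⁻¹).val : ℕ) : ZMod 7) = (u - t) * (c i)⁻¹ := natCast_val' _
  rw [h1]
  have h2 : (c i)⁻¹ * c i = 1 :=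
    ZMod.inv_mul_of_unit (c i) (by
      have : ∀ a : ZMod 7, a ≠ 0 → IsUnit a := by decide
      exact this _ (hc i))
  refine Prod.ext rfl ?_
  show t + (u - t) * (c i)⁻¹ * c i = u
  calc t + (u - t) * (c i)⁻¹ * c i = t + (u - t) * ((c i)⁻¹ * c i) := by ring
    _ = u := by rw [h2]; ring

lemma wc_pow (k : ℕ) (i : ZMod n) (t : ZMod 7) :
    ((wc n) ^ k) (i, t) = (i + z n t - z n (t - (k : ZMod 7)), t - (k : ZMod 7)) := by
  induction k with
  | zero => simp
  | succ k ih =>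
      rw [pow_succ', Equiv.Perm.mul_apply, ih]
      show (_ + z n (t - (k:ZMod 7)) - z n (t - (k:ZMod 7) - 1), t - (k:ZMod 7) - 1) = _
      have harg : t - ((k : ℕ) + 1 : ZMod 7) = t - (k : ZMod 7) - 1 := by ring
      push_cast
      rw [harg]
      exact Prod.ext (by ring) rfl

lemma wc_col_sameCycle (x y : ZMod n × ZMod 7) (h : x.1 + z n x.2 = y.1 + z n y.2) :
    (wc n).SameCycle x y := by
  obtain ⟨i, t⟩ := x
  obtain ⟨j, u⟩ := y
  simp only at h
  refine sameCycle_of_pow _ ((t - u).val) ?_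
  rw [wc_pow]
  have h2 : t - (((t - u).val : ℕ) : ZMod 7) = u := by rw [natCast_val']; ring
  rw [h2]
  refine Prod.ext ?_ rfl
  show i + z n t - z n u = j
  rw [h]; ring

section CaseA

variable (n) in
def cA : ZMod n → ZMod 7 := fun i => if i = 0 then 2 else 1

lemma cA_ne (i : ZMod n) : cA n i ≠ 0 := by
  unfold cA
  split <;> decide

lemma arcA (hn7 : 7 ≤ n) {t : ZMod 7} (ht : t ≠ 0) :
    ∀ m : ℕ, m < n → (wr (cA n) * wc n).SameCycle ((0 : ZMod n), t) (((m : ℕ) : ZMod n), t) := by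
  intro m
  induction m with
  | zero => intro _; simp only [Nat.cast_zero]; exact SameCycle.refl _ _
  | succ m ih =>
      intro hm1
      have prev := ih (by omega)
      have hcast : ((m : ℕ) : ZMod n) + 1 = (((m + 1 : ℕ)) : ZMod n) := by push_cast; ring
      have hne : (((m + 1 : ℕ)) : ZMod n) ≠ 0 := cast_ne_zero' (by omega) hm1
      have hval : cA n (((m + 1 : ℕ)) : ZMod n) = 1 := by unfold cA; rw [if_neg hne]
      have hs : (wr (cA n) * wc n).SameCycle (((m : ℕ) : ZMod n), t) (((m + 1 : ℕ) : ZMod n), t) := by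
        have h := sameCycle_apply (wr (cA n) * wc n) (((m : ℕ) : ZMod n), t)
        rwa [pi_step1 _ ht, hcast, hval, (by ring : t - 1 + 1 = t)] at h
      exact prev.trans hs

lemma hopA (hn7 : 7 ≤ n) {t : ZMod 7} (ht : t ≠ 0) :
    (wr (cA n) * wc n).SameCycle ((0 : ZMod n), t) ((0 : ZMod n), t + 1) := by
  have h1 := arcA hn7 ht (n - 1) (by omega)
  rw [cast_neg_one] at h1
  have hval : cA n ((-1 : ZMod n) + 1) = 2 := by
    unfold cA; rw [neg_add_cancel, if_pos rfl]
  have hs : (wr (cA n) * wc n).SameCycle ((-1 : ZMod n), t) ((0 : ZMod n), t + 1) := by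
    have h := sameCycle_apply (wr (cA n) * wc n) ((-1 : ZMod n), t)
    rwa [pi_step1 _ ht, hval, neg_add_cancel, (by ring : t - 1 + 2 = t + 1)] at h
  exact h1.trans hs

lemma masterA (hn7 : 7 ≤ n) :
    ∀ k : ℕ, ∀ i : ZMod n, i = 6 + 6 * ((k : ℕ) : ZMod n) →
      (wr (cA n) * wc n).SameCycle (i, (0 : ZMod 7)) ((0 : ZMod n), (1 : ZMod 7)) := by
  intro k
  induction k with
  | zero =>
      intro i hi
      norm_num at hi
      subst hi
      have h := sameCycle_apply (wr (cA n) * wc n) ((6 : ZMod n), (0 : ZMod 7))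
      have hval : cA n ((6 : ZMod n) - 6) = 2 := by unfold cA; rw [sub_self, if_pos rfl]
      rwa [pi_step0, hval, sub_self, (by decide : (6 : ZMod 7) + 2 = 1)] at h
  | succ k ih =>
      intro i hi
      by_cases h6 : i - 6 = 0
      · have h := sameCycle_apply (wr (cA n) * wc n) (i, (0 : ZMod 7))
        have hval : cA n (i - 6) = 2 := by unfold cA; rw [if_pos h6]
        rwa [pi_step0, hval, h6, (by decide : (6 : ZMod 7) + 2 = 1)] at h
      · have hval : cA n (i - 6) = 1 := by unfold cA; rw [if_neg h6]
        have h := sameCycle_apply (wr (cA n) * wc n) (i, (0 : ZMod 7))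
        rw [pi_step0, hval, (by decide : (6 : ZMod 7) + 1 = 0)] at h
        have hi6 : i - 6 = 6 + 6 * ((k : ℕ) : ZMod n) := by
          rw [hi]; push_cast; ring
        exact h.trans (ih _ hi6)

lemma decompA (hodd : Odd n) (h3 : ¬ (3 ∣ n)) :
    ∀ i : ZMod n, ∃ k : ℕ, i = 6 + 6 * ((k : ℕ) : ZMod n) := by
  have h2 : ¬ 2 ∣ n := by
    rw [Nat.odd_iff] at hodd
    omega
  have hco : Nat.Coprime 6 n := by
    have : Nat.Coprime (2 * 3) n :=
      Nat.Coprime.mul ((Nat.prime_two.coprime_iff_not_dvd).mpr h2)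
        ((Nat.prime_three.coprime_iff_not_dvd).mpr h3)
    exact this
  have hu : IsUnit ((6 : ℕ) : ZMod n) := (ZMod.isUnit_iff_coprime 6 n).mpr hco
  obtain ⟨u, hu⟩ := hu
  intro i
  refine ⟨((↑u⁻¹ * (i - 6) : ZMod n)).val, ?_⟩
  rw [natCast_val']
  have h6 : ((6 : ℕ) : ZMod n) = (6 : ZMod n) := by norm_num
  have key : (6 : ZMod n) * (↑u⁻¹ * (i - 6)) = i - 6 := by
    rw [← h6, ← hu, ← mul_assoc, Units.mul_inv, one_mul]
  linear_combination -key

lemma allA (hn7 : 7 ≤ n) (hodd : Odd n) (h3 : ¬ (3 ∣ n)) :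
    ∀ x : ZMod n × ZMod 7,
      (wr (cA n) * wc n).SameCycle x ((0 : ZMod n), (1 : ZMod 7)) := by
  have c1 : (wr (cA n) * wc n).SameCycle ((0:ZMod n), (1:ZMod 7)) ((0:ZMod n), (1:ZMod 7)) :=
    SameCycle.refl _ _
  have step : ∀ t : ZMod 7, t ≠ 0 →
      (wr (cA n) * wc n).SameCycle ((0:ZMod n), t) ((0:ZMod n), t + 1) := fun t ht => hopA hn7 ht
  have c2 : (wr (cA n) * wc n).SameCycle ((0:ZMod n), (2:ZMod 7)) ((0:ZMod n), (1:ZMod 7)) := by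
    have h := (step 1 (by decide)).symm
    rwa [(by decide : (1 : ZMod 7) + 1 = 2)] at h
  have c3 : (wr (cA n) * wc n).SameCycle ((0:ZMod n), (3:ZMod 7)) ((0:ZMod n), (1:ZMod 7)) := by
    have h := (step 2 (by decide)).symm
    rw [(by decide : (2 : ZMod 7) + 1 = 3)] at h
    exact h.trans c2
  have c4 : (wr (cA n) * wc n).SameCycle ((0:ZMod n), (4:ZMod 7)) ((0:ZMod n), (1:ZMod 7)) := by
    have h := (step 3 (by decide)).symm
    rw [(by decide : (3 : ZMod 7) + 1 = 4)] at h
    exact h.trans c3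
  have c5 : (wr (cA n) * wc n).SameCycle ((0:ZMod n), (5:ZMod 7)) ((0:ZMod n), (1:ZMod 7)) := by
    have h := (step 4 (by decide)).symm
    rw [(by decide : (4 : ZMod 7) + 1 = 5)] at h
    exact h.trans c4
  have c6 : (wr (cA n) * wc n).SameCycle ((0:ZMod n), (6:ZMod 7)) ((0:ZMod n), (1:ZMod 7)) := by
    have h := (step 5 (by decide)).symm
    rw [(by decide : (5 : ZMod 7) + 1 = 6)] at h
    exact h.trans c5
  have call : ∀ t : ZMod 7, t ≠ 0 →
      (wr (cA n) * wc n).SameCycle ((0:ZMod n), t) ((0:ZMod n), (1:ZMod 7)) := by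
    intro t ht
    have : t = 1 ∨ t = 2 ∨ t = 3 ∨ t = 4 ∨ t = 5 ∨ t = 6 := by revert ht; revert t; decide
    rcases this with h|h|h|h|h|h <;> subst h
    exacts [c1, c2, c3, c4, c5, c6]
  rintro ⟨i, t⟩
  by_cases ht : t = 0
  · subst ht
    obtain ⟨k, hk⟩ := decompA hodd h3 i
    exact masterA hn7 k i hk
  · have harc := arcA hn7 ht i.val (ZMod.val_lt i)
    rw [natCast_val'] at harc
    exact harc.symm.trans (call t ht)

end CaseA

section CaseB

lemma cast_inj_small {n : ℕ} [NeZero n] {a b : ℕ} (ha : a < n) (hb : b < n) :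
    ((a : ZMod n) = (b : ZMod n)) ↔ a = b := by
  rw [ZMod.natCast_eq_natCast_iff', Nat.mod_eq_of_lt ha, Nat.mod_eq_of_lt hb]

lemma cast_ne_one' {m : ℕ} (hn7 : 7 ≤ n) (h1 : m ≠ 1) (h : m < n) : ((m : ℕ) : ZMod n) ≠ 1 := by
  have := (cast_inj_small (n := n) h (show 1 < n by omega)).not.mpr h1
  simpa using this

lemma cast_ne_two' {m : ℕ} (hn7 : 7 ≤ n) (h2 : m ≠ 2) (h : m < n) : ((m : ℕ) : ZMod n) ≠ 2 := by
  have := (cast_inj_small (n := n) h (show 2 < n by omega)).not.mpr h2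
  simpa using this

variable (n) in
def cB : ZMod n → ZMod 7 := fun i =>
  if i = 0 then 2 else if i = 1 then 2 else if i = 2 then 3 else 1

lemma cB_ne (i : ZMod n) : cB n i ≠ 0 := by
  unfold cB
  split
  · decide
  · split
    · decide
    · split <;> decide

lemma one_ne_zero' (hn7 : 7 ≤ n) : (1 : ZMod n) ≠ 0 := by
  have := (cast_inj_small (n := n) (show 1 < n by omega) (show 0 < n by omega)).not.mpr
    (by omega : (1:ℕ) ≠ 0)
  simpa using this

lemma two_ne_zero' (hn7 : 7 ≤ n) : (2 : ZMod n) ≠ 0 := by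
  have := (cast_inj_small (n := n) (show 2 < n by omega) (show 0 < n by omega)).not.mpr
    (by omega : (2:ℕ) ≠ 0)
  simpa using this

lemma two_ne_one' (hn7 : 7 ≤ n) : (2 : ZMod n) ≠ 1 := by
  have := (cast_inj_small (n := n) (show 2 < n by omega) (show 1 < n by omega)).not.mpr
    (by omega : (2:ℕ) ≠ 1)
  simpa using this

lemma cB0 : cB n 0 = 2 := by unfold cB; rw [if_pos rfl]

lemma cB1 (hn7 : 7 ≤ n) : cB n 1 = 2 := by
  unfold cB; rw [if_neg (one_ne_zero' hn7), if_pos rfl]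

lemma cB2 (hn7 : 7 ≤ n) : cB n 2 = 3 := by
  unfold cB; rw [if_neg (two_ne_zero' hn7), if_neg (two_ne_one' hn7), if_pos rfl]

lemma cB_big {i : ZMod n} (h0 : i ≠ 0) (h1 : i ≠ 1) (h2 : i ≠ 2) : cB n i = 1 := by
  unfold cB; rw [if_neg h0, if_neg h1, if_neg h2]

lemma arcB (hn7 : 7 ≤ n) {t : ZMod 7} (ht : t ≠ 0) :
    ∀ m : ℕ, 2 ≤ m → m < n →
      (wr (cB n) * wc n).SameCycle ((2 : ZMod n), t) (((m : ℕ) : ZMod n), t) := by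
  intro m
  induction m with
  | zero => omega
  | succ m ih =>
      intro h2m hm1
      by_cases hm2 : m + 1 = 2
      · rw [hm2]
        simp only [Nat.cast_ofNat]
        exact SameCycle.refl _ _
      · have prev := ih (by omega) (by omega)
        have hcast : ((m : ℕ) : ZMod n) + 1 = (((m + 1 : ℕ)) : ZMod n) := by push_cast; ring
        have hne0 : (((m + 1 : ℕ)) : ZMod n) ≠ 0 := cast_ne_zero' (by omega) hm1
        have hne1 : (((m + 1 : ℕ)) : ZMod n) ≠ 1 := cast_ne_one' hn7 (by omega) hm1
        have hne2 : (((m + 1 : ℕ)) : ZMod n) ≠ 2 := cast_ne_two' hn7 (by omega) hm1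
        have hval : cB n (((m + 1 : ℕ)) : ZMod n) = 1 := cB_big hne0 hne1 hne2
        have hs : (wr (cB n) * wc n).SameCycle (((m : ℕ) : ZMod n), t)
            (((m + 1 : ℕ) : ZMod n), t) := by
          have h := sameCycle_apply (wr (cB n) * wc n) (((m : ℕ) : ZMod n), t)
          rwa [pi_step1 _ ht, hcast, hval, (by ring : t - 1 + 1 = t)] at h
        exact prev.trans hs

lemma arcB' (hn7 : 7 ≤ n) {t : ZMod 7} (ht : t ≠ 0) (i : ZMod n) (hi : 2 ≤ i.val) :
    (wr (cB n) * wc n).SameCycle ((2 : ZMod n), t) (i, t) := by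
  have h := arcB hn7 ht i.val hi (ZMod.val_lt i)
  rwa [natCast_val'] at h

lemma hopB (hn7 : 7 ≤ n) {t : ZMod 7} (ht : t ≠ 0) :
    (wr (cB n) * wc n).SameCycle ((2 : ZMod n), t) ((0 : ZMod n), t + 1) := by
  have h1 := arcB hn7 ht (n - 1) (by omega) (by omega)
  rw [cast_neg_one] at h1
  have hs : (wr (cB n) * wc n).SameCycle ((-1 : ZMod n), t) ((0 : ZMod n), t + 1) := by
    have h := sameCycle_apply (wr (cB n) * wc n) ((-1 : ZMod n), t)
    rwa [pi_step1 _ ht, neg_add_cancel, cB0, (by ring : t - 1 + 2 = t + 1)] at h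
  exact h1.trans hs

lemma s0B (hn7 : 7 ≤ n) {u : ZMod 7} (hu : u ≠ 0) :
    (wr (cB n) * wc n).SameCycle ((0 : ZMod n), u) ((1 : ZMod n), u + 1) := by
  have h := sameCycle_apply (wr (cB n) * wc n) ((0 : ZMod n), u)
  rwa [pi_step1 _ hu, zero_add, cB1 hn7, (by ring : u - 1 + 2 = u + 1)] at h

lemma s1B (hn7 : 7 ≤ n) {u : ZMod 7} (hu : u ≠ 0) :
    (wr (cB n) * wc n).SameCycle ((1 : ZMod n), u) ((2 : ZMod n), u + 2) := by
  have h := sameCycle_apply (wr (cB n) * wc n) ((1 : ZMod n), u)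
  rwa [pi_step1 _ hu, one_add_one_eq_two, cB2 hn7, (by ring : u - 1 + 3 = u + 2)] at h

variable (n) in
def bridgeB (cc : ℕ) : ZMod n × ZMod 7 :=
  if cc = 0 then ((0 : ZMod n), 1) else if cc = 1 then ((1 : ZMod n), 1) else ((2 : ZMod n), 2)

lemma modeq_extract (h3 : 3 ∣ n) {a b : ℕ} (h : ((a : ℕ) : ZMod n) = ((b : ℕ) : ZMod n)) :
    a % 3 = b % 3 := by
  rw [ZMod.natCast_eq_natCast_iff] at h
  exact h.of_dvd h3

lemma masterB (hn7 : 7 ≤ n) (h3 : 3 ∣ n) :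
    ∀ k : ℕ, ∀ cc : ℕ, cc < 3 → ∀ i : ZMod n,
      i = 6 + ((cc : ℕ) : ZMod n) + 6 * ((k : ℕ) : ZMod n) →
      (wr (cB n) * wc n).SameCycle (i, (0 : ZMod 7)) (bridgeB n cc) := by
  intro k
  induction k with
  | zero =>
      intro cc hcc3 i hi
      have hi6 : i - 6 = ((cc : ℕ) : ZMod n) := by rw [hi]; push_cast; ring
      have h := sameCycle_apply (wr (cB n) * wc n) (i, (0 : ZMod 7))
      rw [pi_step0, hi6] at h
      interval_cases cc
      · rwa [Nat.cast_zero, cB0, (by decide : (6 : ZMod 7) + 2 = 1)] at h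
      · rwa [Nat.cast_one, cB1 hn7, (by decide : (6 : ZMod 7) + 2 = 1)] at h
      · rwa [Nat.cast_two, cB2 hn7, (by decide : (6 : ZMod 7) + 3 = 2)] at h
  | succ k ih =>
      intro cc hcc3 i hi
      push_cast at hi
      have h := sameCycle_apply (wr (cB n) * wc n) (i, (0 : ZMod 7))
      rw [pi_step0] at h
      by_cases h0 : i - 6 = 0
      · have key : ((0 : ℕ) : ZMod n) = ((cc + 6 * (k + 1) : ℕ) : ZMod n) := by
          push_cast
          linear_combination hi - h0
        have hcc : cc = 0 := by have := modeq_extract h3 key; omega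
        subst hcc
        rw [h0, cB0, (by decide : (6 : ZMod 7) + 2 = 1)] at h
        exact h
      · by_cases h1 : i - 6 = 1
        · have key : ((1 : ℕ) : ZMod n) = ((cc + 6 * (k + 1) : ℕ) : ZMod n) := by
            push_cast
            linear_combination hi - h1
          have hcc : cc = 1 := by have := modeq_extract h3 key; omega
          subst hcc
          rw [h1, cB1 hn7, (by decide : (6 : ZMod 7) + 2 = 1)] at h
          exact h
        · by_cases h2 : i - 6 = 2
          · have key : ((2 : ℕ) : ZMod n) = ((cc + 6 * (k + 1) : ℕ) : ZMod n) := by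
              push_cast
              linear_combination hi - h2
            have hcc : cc = 2 := by have := modeq_extract h3 key; omega
            subst hcc
            rw [h2, cB2 hn7, (by decide : (6 : ZMod 7) + 3 = 2)] at h
            exact h
          · rw [cB_big h0 h1 h2, (by decide : (6 : ZMod 7) + 1 = 0)] at h
            have hi6 : i - 6 = 6 + ((cc : ℕ) : ZMod n) + 6 * ((k : ℕ) : ZMod n) := by
              rw [hi]; ring
            exact h.trans (ih cc hcc3 _ hi6)

lemma decompB (hodd : Odd n) :
    ∀ i : ZMod n, ∃ cc : ℕ, cc < 3 ∧ ∃ k : ℕ,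
      i = 6 + ((cc : ℕ) : ZMod n) + 6 * ((k : ℕ) : ZMod n) := by
  have h2 : ¬ 2 ∣ n := by rw [Nat.odd_iff] at hodd; omega
  have hu : IsUnit ((2 : ℕ) : ZMod n) :=
    (ZMod.isUnit_iff_coprime 2 n).mpr ((Nat.prime_two.coprime_iff_not_dvd).mpr h2)
  obtain ⟨u, hu⟩ := hu
  intro i
  refine ⟨i.val % 3, by omega, ((↑u⁻¹ * ((↑(i.val / 3) : ZMod n) - 2) : ZMod n)).val, ?_⟩
  rw [natCast_val']
  have h2' : ((2 : ℕ) : ZMod n) = (2 : ZMod n) := by norm_num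
  have key1 : (2 : ZMod n) * (↑u⁻¹ * ((↑(i.val / 3) : ZMod n) - 2)) =
      (↑(i.val / 3) : ZMod n) - 2 := by
    rw [← h2', ← hu, ← mul_assoc, Units.mul_inv, one_mul]
  have hv : 3 * (i.val / 3) + i.val % 3 = i.val := Nat.div_add_mod i.val 3
  have key2 : ((i.val : ℕ) : ZMod n) = 3 * (↑(i.val / 3) : ZMod n) + ((i.val % 3 : ℕ) : ZMod n) := by
    conv_lhs => rw [← hv]
    push_cast
    ring
  linear_combination key2 - 3 * key1 - natCast_val' i


lemma allB (hn7 : 7 ≤ n) (hodd : Odd n) (h3 : 3 ∣ n) :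
    ∀ x : ZMod n × ZMod 7,
      (wr (cB n) * wc n).SameCycle x ((2 : ZMod n), (1 : ZMod 7)) := by
  set π := wr (cB n) * wc n with hπ
  -- chain d
  have conn24 : π.SameCycle ((2:ZMod n), (4:ZMod 7)) ((2:ZMod n), (1:ZMod 7)) := by
    have ha := hopB hn7 (by decide : (4:ZMod 7) ≠ 0)
    rw [(by decide : (4:ZMod 7) + 1 = 5)] at ha
    have hb := s0B hn7 (by decide : (5:ZMod 7) ≠ 0)
    rw [(by decide : (5:ZMod 7) + 1 = 6)] at hb
    have hc := s1B hn7 (by decide : (6:ZMod 7) ≠ 0)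
    rw [(by decide : (6:ZMod 7) + 2 = 1)] at hc
    exact ha.trans (hb.trans hc)
  have conn01 : π.SameCycle ((0:ZMod n), (1:ZMod 7)) ((2:ZMod n), (1:ZMod 7)) := by
    have ha := s0B hn7 (by decide : (1:ZMod 7) ≠ 0)
    rw [(by decide : (1:ZMod 7) + 1 = 2)] at ha
    have hb := s1B hn7 (by decide : (2:ZMod 7) ≠ 0)
    rw [(by decide : (2:ZMod 7) + 2 = 4)] at hb
    exact ha.trans (hb.trans conn24)
  have conn12 : π.SameCycle ((1:ZMod n), (2:ZMod 7)) ((2:ZMod n), (1:ZMod 7)) := by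
    have hb := s1B hn7 (by decide : (2:ZMod 7) ≠ 0)
    rw [(by decide : (2:ZMod 7) + 2 = 4)] at hb
    exact hb.trans conn24
  have conn02 : π.SameCycle ((0:ZMod n), (2:ZMod 7)) ((2:ZMod n), (1:ZMod 7)) := by
    have ha := hopB hn7 (by decide : (1:ZMod 7) ≠ 0)
    rw [(by decide : (1:ZMod 7) + 1 = 2)] at ha
    exact ha.symm
  have conn13 : π.SameCycle ((1:ZMod n), (3:ZMod 7)) ((2:ZMod n), (1:ZMod 7)) := by
    have ha := s0B hn7 (by decide : (2:ZMod 7) ≠ 0)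
    rw [(by decide : (2:ZMod 7) + 1 = 3)] at ha
    exact ha.symm.trans conn02
  have conn25 : π.SameCycle ((2:ZMod n), (5:ZMod 7)) ((2:ZMod n), (1:ZMod 7)) := by
    have ha := s1B hn7 (by decide : (3:ZMod 7) ≠ 0)
    rw [(by decide : (3:ZMod 7) + 2 = 5)] at ha
    exact ha.symm.trans conn13
  have conn06 : π.SameCycle ((0:ZMod n), (6:ZMod 7)) ((2:ZMod n), (1:ZMod 7)) := by
    have ha := hopB hn7 (by decide : (5:ZMod 7) ≠ 0)
    rw [(by decide : (5:ZMod 7) + 1 = 6)] at ha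
    exact ha.symm.trans conn25
  have conn10 : π.SameCycle ((1:ZMod n), (0:ZMod 7)) ((2:ZMod n), (1:ZMod 7)) := by
    have ha := s0B hn7 (by decide : (6:ZMod 7) ≠ 0)
    rw [(by decide : (6:ZMod 7) + 1 = 0)] at ha
    exact ha.symm.trans conn06
  have conn11 : π.SameCycle ((1:ZMod n), (1:ZMod 7)) ((2:ZMod n), (1:ZMod 7)) := by
    have hm := masterB hn7 h3 (n - 1) 1 (by omega) (1 : ZMod n) (by
      rw [cast_neg_one]; push_cast; ring)
    have hb : bridgeB n 1 = ((1:ZMod n), (1:ZMod 7)) := rfl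
    rw [hb] at hm
    exact hm.symm.trans conn10
  have conn23 : π.SameCycle ((2:ZMod n), (3:ZMod 7)) ((2:ZMod n), (1:ZMod 7)) := by
    have ha := s1B hn7 (by decide : (1:ZMod 7) ≠ 0)
    rw [(by decide : (1:ZMod 7) + 2 = 3)] at ha
    exact ha.symm.trans conn11
  have conn04 : π.SameCycle ((0:ZMod n), (4:ZMod 7)) ((2:ZMod n), (1:ZMod 7)) := by
    have ha := hopB hn7 (by decide : (3:ZMod 7) ≠ 0)
    rw [(by decide : (3:ZMod 7) + 1 = 4)] at ha
    exact ha.symm.trans conn23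
  have conn15 : π.SameCycle ((1:ZMod n), (5:ZMod 7)) ((2:ZMod n), (1:ZMod 7)) := by
    have ha := s0B hn7 (by decide : (4:ZMod 7) ≠ 0)
    rw [(by decide : (4:ZMod 7) + 1 = 5)] at ha
    exact ha.symm.trans conn04
  have conn20 : π.SameCycle ((2:ZMod n), (0:ZMod 7)) ((2:ZMod n), (1:ZMod 7)) := by
    have ha := s1B hn7 (by decide : (5:ZMod 7) ≠ 0)
    rw [(by decide : (5:ZMod 7) + 2 = 0)] at ha
    exact ha.symm.trans conn15
  have conn22 : π.SameCycle ((2:ZMod n), (2:ZMod 7)) ((2:ZMod n), (1:ZMod 7)) := by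
    have hm := masterB hn7 h3 (n - 1) 2 (by omega) (2 : ZMod n) (by
      rw [cast_neg_one]; push_cast; ring)
    have hb : bridgeB n 2 = ((2:ZMod n), (2:ZMod 7)) := rfl
    rw [hb] at hm
    exact hm.symm.trans conn20
  have conn03 : π.SameCycle ((0:ZMod n), (3:ZMod 7)) ((2:ZMod n), (1:ZMod 7)) := by
    have ha := hopB hn7 (by decide : (2:ZMod 7) ≠ 0)
    rw [(by decide : (2:ZMod 7) + 1 = 3)] at ha
    exact ha.symm.trans conn22
  have conn14 : π.SameCycle ((1:ZMod n), (4:ZMod 7)) ((2:ZMod n), (1:ZMod 7)) := by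
    have ha := s0B hn7 (by decide : (3:ZMod 7) ≠ 0)
    rw [(by decide : (3:ZMod 7) + 1 = 4)] at ha
    exact ha.symm.trans conn03
  have conn26 : π.SameCycle ((2:ZMod n), (6:ZMod 7)) ((2:ZMod n), (1:ZMod 7)) := by
    have ha := s1B hn7 (by decide : (4:ZMod 7) ≠ 0)
    rw [(by decide : (4:ZMod 7) + 2 = 6)] at ha
    exact ha.symm.trans conn14
  have conn00 : π.SameCycle ((0:ZMod n), (0:ZMod 7)) ((2:ZMod n), (1:ZMod 7)) := by
    have ha := hopB hn7 (by decide : (6:ZMod 7) ≠ 0)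
    rw [(by decide : (6:ZMod 7) + 1 = 0)] at ha
    exact ha.symm.trans conn26
  have conn16 : π.SameCycle ((1:ZMod n), (6:ZMod 7)) ((2:ZMod n), (1:ZMod 7)) := by
    have ha := s0B hn7 (by decide : (5:ZMod 7) ≠ 0)
    rw [(by decide : (5:ZMod 7) + 1 = 6)] at ha
    have hb := hopB hn7 (by decide : (4:ZMod 7) ≠ 0)
    rw [(by decide : (4:ZMod 7) + 1 = 5)] at hb
    exact ha.symm.trans (hb.symm.trans conn24)
  have conn05 : π.SameCycle ((0:ZMod n), (5:ZMod 7)) ((2:ZMod n), (1:ZMod 7)) := by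
    have hb := hopB hn7 (by decide : (4:ZMod 7) ≠ 0)
    rw [(by decide : (4:ZMod 7) + 1 = 5)] at hb
    exact hb.symm.trans conn24
  have conn0 : ∀ t : ZMod 7, π.SameCycle ((0:ZMod n), t) ((2:ZMod n), (1:ZMod 7)) := by
    intro t
    have : t = 0 ∨ t = 1 ∨ t = 2 ∨ t = 3 ∨ t = 4 ∨ t = 5 ∨ t = 6 := by revert t; decide
    rcases this with h|h|h|h|h|h|h <;> subst h
    exacts [conn00, conn01, conn02, conn03, conn04, conn05, conn06]
  have conn1 : ∀ t : ZMod 7, π.SameCycle ((1:ZMod n), t) ((2:ZMod n), (1:ZMod 7)) := by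
    intro t
    have : t = 0 ∨ t = 1 ∨ t = 2 ∨ t = 3 ∨ t = 4 ∨ t = 5 ∨ t = 6 := by revert t; decide
    rcases this with h|h|h|h|h|h|h <;> subst h
    exacts [conn10, conn11, conn12, conn13, conn14, conn15, conn16]
  have conn2 : ∀ t : ZMod 7, π.SameCycle ((2:ZMod n), t) ((2:ZMod n), (1:ZMod 7)) := by
    intro t
    have : t = 0 ∨ t = 1 ∨ t = 2 ∨ t = 3 ∨ t = 4 ∨ t = 5 ∨ t = 6 := by revert t; decide
    rcases this with h|h|h|h|h|h|h <;> subst h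
    exacts [conn20, SameCycle.refl _ _, conn22, conn23, conn24, conn25, conn26]
  rintro ⟨i, t⟩
  by_cases ht : t = 0
  · subst ht
    obtain ⟨cc, hcc3, k, hk⟩ := decompB hodd i
    have hm := masterB hn7 h3 k cc hcc3 i hk
    interval_cases cc
    · exact hm.trans conn01
    · exact hm.trans conn11
    · exact hm.trans conn22
  · by_cases hv : 2 ≤ i.val
    · exact (arcB' hn7 ht i hv).symm.trans (conn2 t)
    · have hi01 : i = 0 ∨ i = 1 := by
        have h01 : i.val = 0 ∨ i.val = 1 := by omega
        rcases h01 with h|h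
        · left; rw [← natCast_val' i, h]; norm_num
        · right; rw [← natCast_val' i, h]; norm_num
      rcases hi01 with h|h <;> subst h
      · exact conn0 t
      · exact conn1 t

end CaseB


end SevenDiagAux

open SevenDiagAux in
/-- For a cyclically `7`-diagonal `n × n` array of odd size `n ≥ 7`, there exist
compatible orderings `ωr` of the rows and `ωc` of the columns: permutations of the
`7n` filled cells whose orbits are the rows (resp. columns), with `ωr ∘ ωc` a single
cycle on all filled cells. -/
theorem compatible_orderings_of_seven_diagonal (n : ℕ) [NeZero n]
    (hn : 7 ≤ n) (hodd : Odd n) (r : ZMod n) :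
    ∃ ωr ωc : Equiv.Perm {p : Fin n × Fin n // FilledCell n 7 r p},
      (∀ x, (ωr x).val.1 = x.val.1) ∧
      (∀ x y, x.val.1 = y.val.1 → ωr.SameCycle x y) ∧
      (∀ x, (ωc x).val.2 = x.val.2) ∧
      (∀ x y, x.val.2 = y.val.2 → ωc.SameCycle x y) ∧
      (∀ x y, (ωr * ωc).SameCycle x y) := by
  classical
  obtain ⟨c, hc, hall⟩ : ∃ c : ZMod n → ZMod 7, (∀ i, c i ≠ 0) ∧
      ∀ x y : ZMod n × ZMod 7, (wr c * wc n).SameCycle x y := by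
    by_cases h3 : 3 ∣ n
    · exact ⟨cB n, cB_ne, fun x y => (allB hn hodd h3 x).trans (allB hn hodd h3 y).symm⟩
    · exact ⟨cA n, cA_ne, fun x y => (allA hn hodd h3 x).trans (allA hn hodd h3 y).symm⟩
  set e := cellEquiv r hn with he
  refine ⟨e.permCongr (wr c), e.permCongr (wc n), ?_, ?_, ?_, ?_, ?_⟩
  · intro x
    conv_rhs => rw [← e.apply_symm_apply x]
    rfl
  · intro x y h
    have hxy : (e.symm x).1 = (e.symm y).1 := by
      apply toFin_inj
      calc toFin (e.symm x).1 = x.val.1 := by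
            conv_rhs => rw [← e.apply_symm_apply x]
            rfl
        _ = y.val.1 := h
        _ = toFin (e.symm y).1 := by
            conv_lhs => rw [← e.apply_symm_apply y]
            rfl
    have hs := wr_row_sameCycle c hc _ _ hxy
    have h2 := permCongr_sameCycle e (wr c) hs
    rwa [e.apply_symm_apply, e.apply_symm_apply] at h2
  · intro x
    conv_rhs => rw [← e.apply_symm_apply x]
    show toFin ((wc n (e.symm x)).1 + r + z n (wc n (e.symm x)).2)
        = toFin ((e.symm x).1 + r + z n (e.symm x).2)
    exact congrArg toFin (by linear_combination wc_snd (e.symm x))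
  · intro x y h
    have hxy : (e.symm x).1 + z n (e.symm x).2 = (e.symm y).1 + z n (e.symm y).2 := by
      have h1 : toFin ((e.symm x).1 + r + z n (e.symm x).2)
          = toFin ((e.symm y).1 + r + z n (e.symm y).2) := by
        calc toFin ((e.symm x).1 + r + z n (e.symm x).2) = x.val.2 := by
              conv_rhs => rw [← e.apply_symm_apply x]
              rfl
          _ = y.val.2 := h
          _ = toFin ((e.symm y).1 + r + z n (e.symm y).2) := by
              conv_lhs => rw [← e.apply_symm_apply y]
              rfl
      have h2 := toFin_inj h1
      linear_combination h2
    have hs := wc_col_sameCycle _ _ hxy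
    have h2 := permCongr_sameCycle e (wc n) hs
    rwa [e.apply_symm_apply, e.apply_symm_apply] at h2
  · intro x y
    have hmul : (e.permCongr (wr c)) * (e.permCongr (wc n)) = e.permCongr (wr c * wc n) :=
      (map_mul (permCongrMul e) (wr c) (wc n)).symm
    rw [hmul]
    have h2 := permCongr_sameCycle e (wr c * wc n) (hall (e.symm x) (e.symm y))
    rwa [e.apply_symm_apply, e.apply_symm_apply] at h2
end
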